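/- Let K be a compact convex set, Ω a compact Hausdorff space, and Φ : A(K) → C(Ω) a linear isometry with Φ(1) = 1 such that every positive linear functional on Φ(A(K)) has a unique positive norm-preserving extension to C(Ω). For each closed face F of K (identified with a face of the state space of A(K)), the set F̃ = {unique positive extension of δ_z : z ∈ F} is a closed face of P(Ω). -/

import Mathlib

/-- The topological dual of a seminormed space `E` (as in the older Mathlib, where it was
`NormedSpace.Dual`; removed since, in favour of `StrongDual`). -/
abbrev NormedSpace.Dual (𝕜 : Type*) [NontriviallyNormedField 𝕜] (E : Type*)
    [SeminormedAddCommGroup E] [NormedSpace 𝕜 E] : Type _ := E →L[𝕜] 𝕜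

noncomputable instance NormedSpace.Dual.instNormedSpace (𝕜 : Type*) [NontriviallyNormedField 𝕜] (E : Type*)
    [SeminormedAddCommGroup E] [NormedSpace 𝕜 E] : NormedSpace 𝕜 (NormedSpace.Dual 𝕜 E) :=
  inferInstance

noncomputable instance NormedSpace.Dual.instSeminormedAddCommGroup (𝕜 : Type*) [NontriviallyNormedField 𝕜]
    (E : Type*) [SeminormedAddCommGroup E] [NormedSpace 𝕜 E] :
    SeminormedAddCommGroup (NormedSpace.Dual 𝕜 E) :=
  inferInstance

/-- The identity map from the dual to the weak dual (old `NormedSpace.Dual.toWeakDual`). -/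
def NormedSpace.Dual.toWeakDual {𝕜 : Type*} [NontriviallyNormedField 𝕜] {E : Type*}
    [SeminormedAddCommGroup E] [NormedSpace 𝕜 E] : Dual 𝕜 E ≃ₗ[𝕜] WeakDual 𝕜 E :=
  LinearEquiv.refl 𝕜 (E →L[𝕜] 𝕜)

open NormedSpace ContinuousMap

/-- A continuous function on `K` is affine if it preserves convex combinations. -/
def IsAffineOn {E : Type*} [AddCommGroup E] [Module ℝ E] [TopologicalSpace E]
    (K : Set E) (a : C(K, ℝ)) : Prop :=
  ∀ (x y : K) (t : ℝ), 0 ≤ t → t ≤ 1 →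
    ∀ h : t • (x : E) + (1 - t) • (y : E) ∈ K,
      a ⟨t • (x : E) + (1 - t) • (y : E), h⟩ = t * a x + (1 - t) * a y

/-- `A(K)`, the affine continuous real functions on `K`, as a subspace of `C(K, ℝ)`. -/
def affineFns {E : Type*} [AddCommGroup E] [Module ℝ E] [TopologicalSpace E]
    (K : Set E) : Submodule ℝ C(K, ℝ) where
  carrier := {a | IsAffineOn K a}
  add_mem' := by
    intro a b ha hb x y t ht ht' h
    simp only [ContinuousMap.add_apply, ha x y t ht ht' h, hb x y t ht ht' h]; ring
  zero_mem' := by intro x y t ht ht' h; simp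
  smul_mem' := by
    intro c a ha x y t ht ht' h
    simp only [ContinuousMap.smul_apply, ha x y t ht ht' h, smul_eq_mul]; ring

theorem one_mem_affineFns {E : Type*} [AddCommGroup E] [Module ℝ E] [TopologicalSpace E]
    (K : Set E) : (1 : C(K, ℝ)) ∈ affineFns K := by
  intro x y t ht ht' h
  simp only [ContinuousMap.one_apply]; ring

/-!
A unital isometry `A(K) → C(Ω)` is positive, so every state `μ` of `C(Ω)` pulls back to a
functional `Λ` on `A(K)` with `Λ a ≤ sup a`. Such a functional is the evaluation at a point of
`K`: in finitely many coordinates this is Hahn–Banach separation from the compact convex image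
of `K`, and compactness of `K` passes to all of `A(K)`. As continuous linear functionals
separate the points of `E`, a convex combination of states pulls back to the evaluation at the
same convex combination of points, so `F̃` inherits the face property from `F`.
Weak*-closedness: `F̃` is the projection of a closed subset of `WeakDual × K`, and `K` is
compact.
-/

namespace ContinuousMap

variable {X : Type*} [TopologicalSpace X] [CompactSpace X]

theorem nonneg_iff_norm_sub_smul_one_le {f : C(X, ℝ)} {c : ℝ} (hfc : ‖f‖ ≤ c) :
    0 ≤ f ↔ ‖f - c • 1‖ ≤ c := by
  have hc : 0 ≤ c := (norm_nonneg f).trans hfc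
  simp only [ContinuousMap.norm_le _ hc, ContinuousMap.le_def, sub_apply, smul_apply, one_apply,
    smul_eq_mul, mul_one, zero_apply, Real.norm_eq_abs, abs_le]
  refine forall_congr' fun x => ⟨fun hx => ⟨by linarith, ?_⟩, fun hx => by linarith [hx.1]⟩
  linarith [(le_abs_self (f x)).trans ((f.norm_coe_le_norm x).trans hfc)]

theorem one_le_norm_of_apply_one (μ : C(X, ℝ) →L[ℝ] ℝ) (hμ : μ 1 = 1) : 1 ≤ ‖μ‖ := by
  have hone : ‖(1 : C(X, ℝ))‖ ≤ 1 := (ContinuousMap.norm_le _ zero_le_one).mpr fun _ => by simp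
  calc 1 = ‖μ 1‖ := by simp [hμ]
    _ ≤ ‖μ‖ * ‖(1 : C(X, ℝ))‖ := μ.le_opNorm 1
    _ ≤ ‖μ‖ := mul_le_of_le_one_right (norm_nonneg μ) hone

end ContinuousMap

theorem Submodule.nonneg_map_of_isometry_of_map_one {X Y : Type*} [TopologicalSpace X]
    [CompactSpace X] [TopologicalSpace Y] [CompactSpace Y] {V : Submodule ℝ C(X, ℝ)}
    (h1 : (1 : C(X, ℝ)) ∈ V) (Φ : V →ₗ[ℝ] C(Y, ℝ)) (hiso : ∀ a, ‖Φ a‖ = ‖a‖)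
    (hone : Φ ⟨1, h1⟩ = 1) {a : V} (ha : 0 ≤ (a : C(X, ℝ))) : 0 ≤ Φ a := by
  have hdist : ‖Φ a - ‖a‖ • 1‖ = ‖(a : C(X, ℝ)) - ‖a‖ • 1‖ := by
    rw [← hone, ← map_smul, ← map_sub, hiso]
    rfl
  rw [ContinuousMap.nonneg_iff_norm_sub_smul_one_le (hiso a).le, hdist]
  exact (ContinuousMap.nonneg_iff_norm_sub_smul_one_le le_rfl).mp ha

section AffineFns

variable {E : Type*} [AddCommGroup E] [Module ℝ E] [TopologicalSpace E] {K : Set E}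

variable (K) in
def ContinuousLinearMap.restrictAffineFns (f : E →L[ℝ] ℝ) : affineFns K :=
  ⟨⟨fun x => f x, by fun_prop⟩, fun x y t _ _ _ => by simp⟩

@[simp]
theorem ContinuousLinearMap.restrictAffineFns_apply (f : E →L[ℝ] ℝ) (x : K) :
    (f.restrictAffineFns K : C(K, ℝ)) x = f x :=
  rfl

theorem eq_add_of_forall_affineFns_apply [SeparatingDual ℝ E] {z z₁ z₂ : K} {t₁ t₂ : ℝ}
    (h : ∀ a : affineFns K, (a : C(K, ℝ)) z = t₁ * (a : C(K, ℝ)) z₁ + t₂ * (a : C(K, ℝ)) z₂) :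
    (z : E) = t₁ • (z₁ : E) + t₂ • (z₂ : E) := by
  by_contra hne
  obtain ⟨f, hf⟩ := SeparatingDual.exists_separating_of_ne (R := ℝ) hne
  exact hf (by simpa using h (f.restrictAffineFns K))

theorem convex_range_affineFns_eval (hK : Convex ℝ K) {ι : Type*} (a : ι → affineFns K) :
    Convex ℝ (Set.range fun (z : K) i => (a i : C(K, ℝ)) z) := by
  rintro _ ⟨z₁, rfl⟩ _ ⟨z₂, rfl⟩ t₁ t₂ ht₁ ht₂ hsum
  obtain rfl : t₂ = 1 - t₁ := by linarith
  have hmem := hK z₁.2 z₂.2 ht₁ ht₂ hsum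
  exact ⟨⟨_, hmem⟩, funext fun i => (a i).2 z₁ z₂ t₁ ht₁ (by linarith) hmem⟩

variable [CompactSpace K]

theorem exists_forall_apply_eq_of_fintype (hK : Convex ℝ K) (Λ : affineFns K →ₗ[ℝ] ℝ)
    (hΛ : ∀ (a : affineFns K) c, (∀ x, (a : C(K, ℝ)) x ≤ c) → Λ a ≤ c) {ι : Type*} [Fintype ι]
    (a : ι → affineFns K) : ∃ z : K, ∀ i, (a i : C(K, ℝ)) z = Λ (a i) := by
  classical
  set v : K → ι → ℝ := fun z i => (a i : C(K, ℝ)) z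
  suffices (fun i => Λ (a i)) ∈ Set.range v by
    obtain ⟨z, hz⟩ := this
    exact ⟨z, congrFun hz⟩
  by_contra hnot
  have hcl : IsClosed (Set.range v) :=
    (isCompact_range (continuous_pi fun i => map_continuous (a i : C(K, ℝ)))).isClosed
  obtain ⟨f, r, hf, hr⟩ :=
    geometric_hahn_banach_closed_point (convex_range_affineFns_eval hK a) hcl hnot
  -- `f` is a linear combination of coordinates; the same combination `b` of the `a i` is
  -- below `r` on `K` while `Λ b > r`
  set c : ι → ℝ := fun i => f fun j => if i = j then 1 else 0
  have hf_eq : ∀ y, f y = ∑ i, y i * c i := fun y =>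
    (LinearMap.pi_apply_eq_sum_univ f.toLinearMap y).trans (by simp [c])
  set b : affineFns K := ∑ i, c i • a i
  have hb : ∀ z, (b : C(K, ℝ)) z = f (v z) := fun z => by
    simp [b, v, hf_eq, mul_comm]
  have hΛb : Λ b = f fun i => Λ (a i) := by
    simp [b, hf_eq, mul_comm]
  have := hΛ b r fun z => (hb z).trans_le (hf _ ⟨z, rfl⟩).le
  linarith

theorem exists_forall_eq_apply (hK : Convex ℝ K) (Λ : affineFns K →ₗ[ℝ] ℝ)
    (hΛ : ∀ (a : affineFns K) c, (∀ x, (a : C(K, ℝ)) x ≤ c) → Λ a ≤ c) :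
    ∃ z : K, ∀ a, Λ a = (a : C(K, ℝ)) z := by
  obtain ⟨z, -, hz⟩ := isCompact_univ.inter_iInter_nonempty
    (fun a : affineFns K => {z : K | (a : C(K, ℝ)) z = Λ a})
    (fun a => isClosed_eq (map_continuous _) continuous_const) fun u => by
      obtain ⟨z, hz⟩ := exists_forall_apply_eq_of_fintype hK Λ hΛ fun a : u => (a : affineFns K)
      exact ⟨z, trivial, Set.mem_iInter₂.mpr fun a ha => hz ⟨a, ha⟩⟩
  exact ⟨z, fun a => (Set.mem_iInter.mp hz a).symm⟩

end AffineFns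

section LiftedFace

variable {E : Type*} [AddCommGroup E] [Module ℝ E] [TopologicalSpace E] {K : Set E}
  {Ω : Type*} [TopologicalSpace Ω] [CompactSpace Ω]

theorem exists_map_eq_apply_of_state [CompactSpace K] (hK : Convex ℝ K)
    (Φ : affineFns K →L[ℝ] C(Ω, ℝ)) (hiso : ∀ a, ‖Φ a‖ = ‖a‖)
    (hone : Φ ⟨1, one_mem_affineFns K⟩ = 1) (μ : Dual ℝ C(Ω, ℝ))
    (hpos : ∀ g, 0 ≤ g → 0 ≤ μ g) (hμ : μ 1 = 1) :
    ∃ z : K, ∀ a, μ (Φ a) = (a : C(K, ℝ)) z := by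
  refine exists_forall_eq_apply hK (μ.toLinearMap ∘ₗ Φ.toLinearMap) fun a c hac => ?_
  have hle : 0 ≤ ((c • ⟨1, one_mem_affineFns K⟩ - a : affineFns K) : C(K, ℝ)) := fun x => by
    simpa using hac x
  have := hpos _ ((affineFns K).nonneg_map_of_isometry_of_map_one _ Φ.toLinearMap hiso hone hle)
  simp only [ContinuousLinearMap.coe_coe, map_sub, map_smul, hone, hμ] at this ⊢
  simpa using this

variable (Φ : affineFns K →L[ℝ] C(Ω, ℝ))

def liftedFace (F : Set K) : Set (Dual ℝ C(Ω, ℝ)) :=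
  {μ | ‖μ‖ = 1 ∧ (∀ g, 0 ≤ g → 0 ≤ μ g) ∧ ∃ z ∈ F, ∀ a, μ (Φ a) = (a : C(K, ℝ)) z}

variable {Φ}

theorem map_one_of_mem_liftedFace (hone : Φ ⟨1, one_mem_affineFns K⟩ = 1) {F : Set K}
    {μ : Dual ℝ C(Ω, ℝ)} (hμ : μ ∈ liftedFace Φ F) : μ 1 = 1 := by
  obtain ⟨-, -, z, -, hz⟩ := hμ
  simpa [hone] using hz ⟨1, one_mem_affineFns K⟩

theorem isExtreme_liftedFace [SeparatingDual ℝ E] [CompactSpace K] (hK : Convex ℝ K)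
    (hiso : ∀ a, ‖Φ a‖ = ‖a‖) (hone : Φ ⟨1, one_mem_affineFns K⟩ = 1) {F : Set E}
    (hF : IsExtreme ℝ K F) :
    IsExtreme ℝ {μ : Dual ℝ C(Ω, ℝ) | ‖μ‖ = 1 ∧ μ 1 = 1 ∧ ∀ g, 0 ≤ g → 0 ≤ μ g}
      (liftedFace Φ (Subtype.val ⁻¹' F)) := by
  refine ⟨fun μ hμ => ⟨hμ.1, map_one_of_mem_liftedFace hone hμ, hμ.2.1⟩, ?_⟩
  rintro μ₁ ⟨hn₁, h₁, hpos₁⟩ μ₂ ⟨-, h₂, hpos₂⟩ μ ⟨-, -, z, hzF, hz⟩ ⟨t₁, t₂, ht₁, ht₂, hsum, rfl⟩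
  obtain ⟨z₁, hz₁⟩ := exists_map_eq_apply_of_state hK Φ hiso hone μ₁ hpos₁ h₁
  obtain ⟨z₂, hz₂⟩ := exists_map_eq_apply_of_state hK Φ hiso hone μ₂ hpos₂ h₂
  have hseg : (z : E) ∈ openSegment ℝ (z₁ : E) (z₂ : E) := by
    refine ⟨t₁, t₂, ht₁, ht₂, hsum, (eq_add_of_forall_affineFns_apply fun a => ?_).symm⟩
    simpa [hz₁, hz₂] using (hz a).symm
  exact ⟨hn₁, hpos₁, z₁, hF.2 z₁.2 z₂.2 hzF hseg, hz₁⟩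

theorem isClosed_toWeakDual_image_liftedFace [CompactSpace K]
    (hone : Φ ⟨1, one_mem_affineFns K⟩ = 1) {F : Set K} (hF : IsClosed F) :
    IsClosed (Dual.toWeakDual '' liftedFace Φ F : Set (WeakDual ℝ C(Ω, ℝ))) := by
  set G : Set (WeakDual ℝ C(Ω, ℝ) × K) :=
    Prod.fst ⁻¹' (WeakDual.toStrongDual ⁻¹' Metric.closedBall 0 1) ∩
      (⋂ g : {g : C(Ω, ℝ) // 0 ≤ g}, {p | 0 ≤ p.1 g}) ∩ Prod.snd ⁻¹' F ∩
      ⋂ a : affineFns K, {p | p.1 (Φ a) = (a : C(K, ℝ)) p.2}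
  have hG : IsClosed G := by
    refine (((WeakDual.isClosed_closedBall 0 1).preimage continuous_fst).inter
      (isClosed_iInter fun g => ?_)).inter (hF.preimage continuous_snd) |>.inter
      (isClosed_iInter fun a => ?_)
    · exact isClosed_le continuous_const ((WeakDual.eval_continuous _).comp continuous_fst)
    · exact isClosed_eq ((WeakDual.eval_continuous _).comp continuous_fst)
        ((map_continuous _).comp continuous_snd)
  convert isClosedMap_fst_of_compactSpace G hG using 1
  ext μ
  constructor
  · rintro ⟨μ, ⟨hn, hpos, z, hzF, hz⟩, rfl⟩
    exact ⟨(Dual.toWeakDual μ, z), ⟨⟨⟨mem_closedBall_zero_iff.mpr hn.le,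
      Set.mem_iInter.mpr fun g => hpos g g.2⟩, hzF⟩, Set.mem_iInter.mpr hz⟩, rfl⟩
  · rintro ⟨⟨μ, z⟩, ⟨⟨⟨hn, hpos⟩, hzF⟩, hz⟩, rfl⟩
    have hz : ∀ a, μ (Φ a) = (a : C(K, ℝ)) z := Set.mem_iInter.mp hz
    have hμ : μ 1 = 1 := by simpa [hone] using hz ⟨1, one_mem_affineFns K⟩
    refine ⟨WeakDual.toStrongDual μ, ⟨le_antisymm (mem_closedBall_zero_iff.mp hn)
      (ContinuousMap.one_le_norm_of_apply_one _ hμ), fun g hg => Set.mem_iInter.mp hpos ⟨g, hg⟩,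
      z, hzF, hz⟩, rfl⟩

end LiftedFace

theorem stmt_16_general {E : Type*} [AddCommGroup E] [Module ℝ E] [TopologicalSpace E]
    [IsTopologicalAddGroup E] [ContinuousSMul ℝ E] [T2Space E] [LocallyConvexSpace ℝ E]
    (K : Set E) [CompactSpace K] (hK : Convex ℝ K)
    (Ω : Type*) [TopologicalSpace Ω] [CompactSpace Ω]
    (Φ : affineFns K →L[ℝ] C(Ω, ℝ))
    (hiso : ∀ a : affineFns K, ‖Φ a‖ = ‖a‖)
    (hone : Φ ⟨(1 : C(K, ℝ)), one_mem_affineFns K⟩ = 1)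
    (F : Set E) (hFK : F ⊆ K) (hFcl : IsClosed F) (hFface : IsExtreme ℝ K F)
    (P : Set (Dual ℝ C(Ω, ℝ)))
    (hP : P = {μ : Dual ℝ C(Ω, ℝ) | ‖μ‖ = 1 ∧ μ 1 = 1 ∧ ∀ g : C(Ω, ℝ), 0 ≤ g → 0 ≤ μ g})
    (Ftilde : Set (Dual ℝ C(Ω, ℝ)))
    (hFtilde : Ftilde = {μ : Dual ℝ C(Ω, ℝ) | ∃ z, ∃ hz : z ∈ F,
      ‖μ‖ = 1 ∧ (∀ g : C(Ω, ℝ), 0 ≤ g → 0 ≤ μ g) ∧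
      ∀ a : affineFns K, μ (Φ a) = (a : C(K, ℝ)) ⟨z, hFK hz⟩}) :
    IsExtreme ℝ P Ftilde ∧
    IsClosed (Dual.toWeakDual '' Ftilde : Set (WeakDual ℝ C(Ω, ℝ))) := by
  have hFtilde' : Ftilde = liftedFace Φ (Subtype.val ⁻¹' F) := by
    subst hFtilde
    ext μ
    exact ⟨fun ⟨z, hz, hn, hpos, h⟩ => ⟨hn, hpos, ⟨z, hFK hz⟩, hz, h⟩,
      fun ⟨hn, hpos, z, hz, h⟩ => ⟨z, hz, hn, hpos, h⟩⟩
  subst hP hFtilde'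
  exact ⟨isExtreme_liftedFace hK hiso hone hFface,
    isClosed_toWeakDual_image_liftedFace hone (hFcl.preimage continuous_subtype_val)⟩

/-- In the setting of a unital isometry `Φ : A(K) → C(Ω)` with unique positive
norm-preserving extensions, for every closed face `F` of `K` the set `F̃` of unique positive
extensions of the evaluations at points of `F` is a (weak*-)closed face of the set `P(Ω)` of
probability measures. -/
theorem stmt_16 {E : Type*} [AddCommGroup E] [Module ℝ E] [TopologicalSpace E]
    [IsTopologicalAddGroup E] [ContinuousSMul ℝ E] [T2Space E] [LocallyConvexSpace ℝ E]
    (K : Set E) [CompactSpace K] (hK : Convex ℝ K)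
    (Ω : Type*) [TopologicalSpace Ω] [CompactSpace Ω] [T2Space Ω]
    (Φ : affineFns K →L[ℝ] C(Ω, ℝ))
    (hiso : ∀ a : affineFns K, ‖Φ a‖ = ‖a‖)
    (hone : Φ ⟨(1 : C(K, ℝ)), one_mem_affineFns K⟩ = 1)
    (hext : ∀ Λ : Dual ℝ (affineFns K),
      (∀ a : affineFns K, 0 ≤ Φ a → 0 ≤ Λ a) →
      ∃! μ : Dual ℝ C(Ω, ℝ),
        (∀ a : affineFns K, μ (Φ a) = Λ a) ∧ ‖μ‖ = ‖Λ‖ ∧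
        (∀ g : C(Ω, ℝ), 0 ≤ g → 0 ≤ μ g))
    (F : Set E) (hFK : F ⊆ K) (hFcl : IsClosed F) (hFface : IsExtreme ℝ K F)
    (P : Set (Dual ℝ C(Ω, ℝ)))
    (hP : P = {μ : Dual ℝ C(Ω, ℝ) | ‖μ‖ = 1 ∧ μ 1 = 1 ∧ ∀ g : C(Ω, ℝ), 0 ≤ g → 0 ≤ μ g})
    (Ftilde : Set (Dual ℝ C(Ω, ℝ)))
    (hFtilde : Ftilde = {μ : Dual ℝ C(Ω, ℝ) | ∃ z, ∃ hz : z ∈ F,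
      ‖μ‖ = 1 ∧ (∀ g : C(Ω, ℝ), 0 ≤ g → 0 ≤ μ g) ∧
      ∀ a : affineFns K, μ (Φ a) = (a : C(K, ℝ)) ⟨z, hFK hz⟩}) :
    IsExtreme ℝ P Ftilde ∧
    IsClosed (Dual.toWeakDual '' Ftilde : Set (WeakDual ℝ C(Ω, ℝ))) :=
  stmt_16_general K hK Ω Φ hiso hone F hFK hFcl hFface P hP Ftilde hFtilde
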